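/- Let φ : ℝ → ℝ be differentiable with φ(x) = (deriv φ x) * x for all x (a homogeneous activation). Consider an L-layer fully connected network on ℝ^n: x_0 = x, x_l = φ.(W_l x_{l-1}) for l = 1, …, L−1 with W_l ∈ ℝ^{n×n}, and output y = W_L x_{L-1}; let R : ℝ^n → ℝ be differentiable. Then the average synaptic saliency over the parameters of layer l equals ⟨∇R(y), y⟩ / n², i.e. (1/n²)·Σ_{i,j} (W_l)_{ij}·∂(R∘f)/∂(W_l)_{ij} is the same for all layers and is inversely proportional to the number n² of parameters in the layer. -/

import Mathlib

/-!
A differentiable `φ` with `φ x = φ' x * x` is positively homogeneous: `t ↦ φ (t x) / t` has zero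
derivative on `t > 0`, so `φ (s x) = s φ x` for `s > 0`. Hence multiplying the weights of one
layer `l ≥ 1` by `s > 0` multiplies the network output `y` by `s`. The total saliency
`∑ (W_l)_{ij} ∂F/∂(W_l)_{ij}` of `F(W_l) = R(f)` is Euler's directional derivative
`d/ds F(s W_l)` at `s = 1`, which therefore equals `d/ds R(s y) = ⟨∇R(y), y⟩` for every layer.
-/

/-- Hidden activations of a fully connected network: `x_0 = x`,
`x_l = φ.(W_l x_{l-1})`. -/
noncomputable def actL (n : ℕ) (φ : ℝ → ℝ) (W : ℕ → Matrix (Fin n) (Fin n) ℝ)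
    (x : Fin n → ℝ) : ℕ → Fin n → ℝ
  | 0 => x
  | l + 1 => fun i => φ (∑ j, W (l + 1) i j * actL n φ W x l j)

/-- Output of the `L`-layer fully connected network: `y = W_L x_{L-1}` (no activation
on the output layer). -/
noncomputable def netL (n L : ℕ) (φ : ℝ → ℝ) (W : ℕ → Matrix (Fin n) (Fin n) ℝ)
    (x : Fin n → ℝ) : Fin n → ℝ :=
  fun i => ∑ j, W L i j * actL n φ W x (L - 1) j

open scoped Topology

-- Derivatives in the matrix entries do not depend on the norm; we take the entrywise sup norm.
open scoped Matrix.Norms.Elementwise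

theorem apply_mul_eq_mul_apply_of_eq_deriv_mul {φ : ℝ → ℝ} (hφd : Differentiable ℝ φ)
    (hφ : ∀ x, φ x = deriv φ x * x) {s : ℝ} (hs : 0 < s) (x : ℝ) : φ (s * x) = s * φ x := by
  have hderiv : ∀ t ∈ Set.Ioi (0 : ℝ), HasDerivAt (fun t => φ (t * x) / t) 0 t := by
    intro t ht
    refine (((hφd (t * x)).hasDerivAt.comp t ((hasDerivAt_id' t).mul_const x)).div
      (hasDerivAt_id' t) (ne_of_gt ht)).congr_deriv ?_
    rw [Function.comp_apply, hφ (t * x)]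
    field_simp
    ring
  have hconst := isOpen_Ioi.is_const_of_deriv_eq_zero isPreconnected_Ioi
    (fun t ht => (hderiv t ht).differentiableAt.differentiableWithinAt)
    (fun t ht => (hderiv t ht).deriv) (Set.mem_Ioi.2 hs) (Set.mem_Ioi.2 one_pos)
  simp only [one_mul, div_one] at hconst
  field_simp at hconst
  linarith

theorem differentiable_update_apply {ι E : Type*} [DecidableEq ι] [NormedAddCommGroup E]
    [NormedSpace ℝ E] (W : ι → E) (l m : ι) :
    Differentiable ℝ (fun M : E => Function.update W l M m) := by
  obtain rfl | hml := eq_or_ne m l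
  · simp only [Function.update_self]
    exact differentiable_id
  · simpa only [Function.update_of_ne hml] using differentiable_const _

section Network

variable {n : ℕ} {φ : ℝ → ℝ} (W : ℕ → Matrix (Fin n) (Fin n) ℝ) (x : Fin n → ℝ) {l : ℕ}

theorem actL_update_of_lt (M : Matrix (Fin n) (Fin n) ℝ) {k : ℕ} (hk : k < l) :
    actL n φ (Function.update W l M) x k = actL n φ W x k := by
  induction k with
  | zero => rfl
  | succ k ih =>
    funext i
    simp only [actL, Function.update_of_ne (by omega : k + 1 ≠ l), ih (by omega)]

theorem actL_update_smul {s : ℝ} (hφ : ∀ z, φ (s * z) = s * φ z) (hl : 1 ≤ l) {k : ℕ}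
    (hk : l ≤ k) : actL n φ (Function.update W l (s • W l)) x k = s • actL n φ W x k := by
  induction k with
  | zero => omega
  | succ k ih =>
    funext i
    obtain rfl | hlk := eq_or_ne l (k + 1)
    · simp only [actL, Function.update_self, actL_update_of_lt W x _ (Nat.lt_succ_self k),
        Matrix.smul_apply, smul_eq_mul, mul_assoc, ← Finset.mul_sum, hφ, Pi.smul_apply]
    · simp only [actL, Function.update_of_ne hlk.symm, ih (by omega), Pi.smul_apply,
        smul_eq_mul, mul_left_comm _ s, ← Finset.mul_sum, hφ]

theorem netL_update_smul {L : ℕ} {s : ℝ} (hφ : ∀ z, φ (s * z) = s * φ z) (hl : 1 ≤ l)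
    (hlL : l ≤ L) : netL n L φ (Function.update W l (s • W l)) x = s • netL n L φ W x := by
  funext i
  obtain rfl | hlL := eq_or_lt_of_le hlL
  · simp only [netL, Function.update_self, actL_update_of_lt W x _ (by omega : l - 1 < l),
      Matrix.smul_apply, smul_eq_mul, mul_assoc, ← Finset.mul_sum, Pi.smul_apply]
  · simp only [netL, Function.update_of_ne hlL.ne',
      actL_update_smul W x hφ hl (show l ≤ L - 1 by omega), Pi.smul_apply, smul_eq_mul,
      mul_left_comm _ s, ← Finset.mul_sum]

theorem differentiable_actL_update (hφ : Differentiable ℝ φ) (k : ℕ) :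
    Differentiable ℝ fun M : Matrix (Fin n) (Fin n) ℝ => actL n φ (Function.update W l M) x k := by
  induction k with
  | zero => exact differentiable_const _
  | succ k ih =>
    refine differentiable_pi.2 fun i => hφ.comp (Differentiable.fun_sum fun j _ => ?_)
    have hW := differentiable_pi.1 (differentiable_update_apply W l (k + 1)) i
    exact (differentiable_pi.1 hW j).mul (differentiable_pi.1 ih j)

theorem differentiable_netL_update {L : ℕ} (hφ : Differentiable ℝ φ) :
    Differentiable ℝ fun M : Matrix (Fin n) (Fin n) ℝ => netL n L φ (Function.update W l M) x :=
  differentiable_pi.2 fun i => Differentiable.fun_sum fun j _ =>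
    (differentiable_pi.1 (differentiable_pi.1 (differentiable_update_apply W l L) i) j).mul
      (differentiable_pi.1 (differentiable_actL_update W x hφ (L - 1)) j)

end Network

section MatrixCalculus

variable {m p : Type*} [DecidableEq m] [DecidableEq p]

theorem Matrix.updateRow_update_eq_add_smul_single (A : Matrix m p ℝ) (i : m) (j : p) (t : ℝ) :
    A.updateRow i (Function.update (A i) j t) = A + (t - A i j) • Matrix.single i j 1 := by
  ext a b
  rcases eq_or_ne a i with rfl | ha <;> rcases eq_or_ne b j with rfl | hb <;>
    simp [Matrix.updateRow_apply, *, Ne.symm]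

variable [Fintype m] [Fintype p]

theorem Matrix.hasDerivAt_updateRow_update (A : Matrix m p ℝ) (i : m) (j : p) :
    HasDerivAt (fun t => A.updateRow i (Function.update (A i) j t)) (Matrix.single i j 1)
      (A i j) := by
  simp_rw [Matrix.updateRow_update_eq_add_smul_single]
  exact ((((hasDerivAt_id (A i j)).sub_const (A i j)).smul_const
    (Matrix.single i j (1 : ℝ))).const_add A).congr_deriv (one_smul ℝ _)

theorem deriv_comp_updateRow_update {F : Matrix m p ℝ → ℝ} {A : Matrix m p ℝ}
    (hF : DifferentiableAt ℝ F A) (i : m) (j : p) :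
    deriv (fun t => F (A.updateRow i (Function.update (A i) j t))) (A i j) =
      fderiv ℝ F A (Matrix.single i j 1) := by
  have hF' : HasFDerivAt F (fderiv ℝ F A) (A.updateRow i (Function.update (A i) j (A i j))) := by
    rw [Function.update_eq_self, Matrix.updateRow_eq_self]
    exact hF.hasFDerivAt
  exact (hF'.comp_hasDerivAt _ (A.hasDerivAt_updateRow_update i j)).deriv

theorem ContinuousLinearMap.sum_sum_mul_single (f : Matrix m p ℝ →L[ℝ] ℝ) (A : Matrix m p ℝ) :
    ∑ i, ∑ j, A i j * f (Matrix.single i j 1) = f A := by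
  conv_rhs => rw [Matrix.matrix_eq_sum_single A]
  simp only [map_sum]
  refine Finset.sum_congr rfl fun i _ => Finset.sum_congr rfl fun j _ => ?_
  rw [← smul_eq_mul, ← map_smul, Matrix.smul_single, smul_eq_mul, mul_one]

theorem sum_sum_mul_deriv_comp_updateRow_update {F : Matrix m p ℝ → ℝ} {A : Matrix m p ℝ}
    (hF : DifferentiableAt ℝ F A) :
    ∑ i, ∑ j, A i j * deriv (fun t => F (A.updateRow i (Function.update (A i) j t))) (A i j) =
      fderiv ℝ F A A := by
  simp only [deriv_comp_updateRow_update hF]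
  exact (fderiv ℝ F A).sum_sum_mul_single A

end MatrixCalculus

section Euler

variable {E E' G : Type*} [NormedAddCommGroup E] [NormedSpace ℝ E] [NormedAddCommGroup E']
  [NormedSpace ℝ E'] [NormedAddCommGroup G] [NormedSpace ℝ G]

theorem HasFDerivAt.hasDerivAt_smul_one {F : E → G} {F' : E →L[ℝ] G} {v : E}
    (hF : HasFDerivAt F F' v) : HasDerivAt (fun s : ℝ => F (s • v)) (F' v) 1 := by
  rw [← one_smul ℝ v] at hF
  exact (hF.comp_hasDerivAt (1 : ℝ) ((hasDerivAt_id (1 : ℝ)).smul_const v)).congr_deriv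
    (by rw [one_smul])

theorem fderiv_apply_self_eq_of_eventuallyEq_smul {F : E → G} {R : E' → G} {v : E} {w : E'}
    (hF : DifferentiableAt ℝ F v) (hR : DifferentiableAt ℝ R w)
    (h : (fun s : ℝ => F (s • v)) =ᶠ[𝓝 1] fun s => R (s • w)) :
    fderiv ℝ F v v = fderiv ℝ R w w :=
  (hF.hasFDerivAt.hasDerivAt_smul_one.congr_of_eventuallyEq h.symm).unique
    hR.hasFDerivAt.hasDerivAt_smul_one

end Euler

theorem stmt_16_general (n L : ℕ) (φ : ℝ → ℝ) (hφdiff : Differentiable ℝ φ)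
    (hφ : ∀ x : ℝ, φ x = deriv φ x * x)
    (W : ℕ → Matrix (Fin n) (Fin n) ℝ) (x : Fin n → ℝ)
    (R : (Fin n → ℝ) → ℝ) (hR : Differentiable ℝ R)
    (l : ℕ) (hl1 : 1 ≤ l) (hlL : l ≤ L) :
    (1 / (n ^ 2 : ℝ)) *
        ∑ i, ∑ j, W l i j *
          deriv (fun t => R (netL n L φ
            (Function.update W l ((W l).updateRow i (Function.update (W l i) j t))) x))
            (W l i j)
      = fderiv ℝ R (netL n L φ W x) (netL n L φ W x) / (n ^ 2 : ℝ) := by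
  have hF : Differentiable ℝ fun M => R (netL n L φ (Function.update W l M) x) :=
    hR.comp (differentiable_netL_update W x hφdiff)
  have hscale : (fun s : ℝ => R (netL n L φ (Function.update W l (s • W l)) x)) =ᶠ[𝓝 1]
      fun s => R (s • netL n L φ W x) :=
    Filter.eventually_of_mem (Ioi_mem_nhds one_pos) fun s hs => congrArg R <|
      netL_update_smul W x (apply_mul_eq_mul_apply_of_eq_deriv_mul hφdiff hφ hs) hl1 hlL
  rw [sum_sum_mul_deriv_comp_updateRow_update (hF (W l)), one_div_mul_eq_div]
  congr 1
  exact fderiv_apply_self_eq_of_eventuallyEq_smul (hF (W l)) (hR _) hscale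

/-- Inverse relationship between layer size and average layer score:
for an `L`-layer fully connected network with homogeneous activation, the average
synaptic saliency over the `n²` parameters of any layer `l` equals `⟨∇R(y), y⟩ / n²`;
in particular it is the same for all layers and inversely proportional to the number
of parameters in the layer. -/
theorem stmt_16 (n L : ℕ) (hL : 1 ≤ L) (φ : ℝ → ℝ) (hφdiff : Differentiable ℝ φ)
    (hφ : ∀ x : ℝ, φ x = deriv φ x * x)
    (W : ℕ → Matrix (Fin n) (Fin n) ℝ) (x : Fin n → ℝ)
    (R : (Fin n → ℝ) → ℝ) (hR : Differentiable ℝ R)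
    (l : ℕ) (hl1 : 1 ≤ l) (hlL : l ≤ L) :
    (1 / (n ^ 2 : ℝ)) *
        ∑ i, ∑ j, W l i j *
          deriv (fun t => R (netL n L φ
            (Function.update W l ((W l).updateRow i (Function.update (W l i) j t))) x))
            (W l i j)
      = fderiv ℝ R (netL n L φ W x) (netL n L φ W x) / (n ^ 2 : ℝ) :=
  stmt_16_general n L φ hφdiff hφ W x R hR l hl1 hlL
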